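/- Localized bilinear kernel estimate: let K ∈ L^∞(ℝ^{n+1}) and ψ a bounded function supported in the ball B(0, 2^j) ⊂ ℝ^{n+1}, 0 ≤ ψ ≤ 1. Then for F, G ∈ L¹ ∩ L²(ℝ^{n+1}), |⟨(ψK) ∗ F, G⟩| ≤ ‖ψK‖_∞ ( ∑_{λ ∈ 2^jℤ^{n+1}} ‖F χ_{Q_λ}‖_1² )^{1/2} ( ∑_{λ ∈ 2^jℤ^{n+1}} ‖G χ_{\widetilde{Q}_λ}‖_1² )^{1/2}, where Q_λ is the cube of side 2^j centered at λ and \widetilde{Q}_λ the cube of side 2^{j+2} with the same center. -/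

import Mathlib

/-!
Off the ball `‖w‖ ≤ 2^j` the kernel `ψK` vanishes, so a.e. `|ψK| ≤ ‖ψK‖_∞ · 1_ball`, and the
pairing is dominated by a positive bilinear form with kernel `1_ball(z - y)`. After Tonelli,
split the `y`-integral over the cubes `Q_λ`: for `y ∈ Q_λ` the ball around `y` lies in `Q̃_λ`, so
the cube `Q_λ` contributes at most `‖Fχ_{Q_λ}‖₁ ‖Gχ_{Q̃_λ}‖₁`, and Cauchy–Schwarz in `λ` finishes.
The ball is taken in the sup norm of `(Fin n → ℝ) × ℝ`; it contains the Euclidean ball.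
-/

open MeasureTheory ENNReal Set

noncomputable section

def latCube (n : ℕ) (j : ℕ) (lam : (Fin n → ℤ) × ℤ) : Set ((Fin n → ℝ) × ℝ) :=
  {z | (∀ i, z.1 i ∈ Set.Ico ((2 : ℝ) ^ j * lam.1 i - 2 ^ j / 2)
          ((2 : ℝ) ^ j * lam.1 i + 2 ^ j / 2)) ∧
    z.2 ∈ Set.Ico ((2 : ℝ) ^ j * lam.2 - 2 ^ j / 2) ((2 : ℝ) ^ j * lam.2 + 2 ^ j / 2)}

/-- The dilated (closed) cube of side `2^{j+2}` with the same center `2^j λ`. -/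
def latCubeT (n : ℕ) (j : ℕ) (lam : (Fin n → ℤ) × ℤ) : Set ((Fin n → ℝ) × ℝ) :=
  {z | (∀ i, |z.1 i - (2 : ℝ) ^ j * lam.1 i| ≤ 2 ^ (j + 2) / 2) ∧
    |z.2 - (2 : ℝ) ^ j * lam.2| ≤ 2 ^ (j + 2) / 2}

theorem ENNReal.tsum_mul_le_Lp_mul_Lq {ι : Type*} (f g : ι → ℝ≥0∞) {p q : ℝ}
    (hpq : p.HolderConjugate q) :
    ∑' i, f i * g i ≤ (∑' i, f i ^ p) ^ (1 / p) * (∑' i, g i ^ q) ^ (1 / q) := by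
  let _ : MeasurableSpace ι := ⊤
  simpa [lintegral_count] using ENNReal.lintegral_mul_le_Lp_mul_Lq Measure.count hpq
    (measurable_from_top (f := f)).aemeasurable (measurable_from_top (f := g)).aemeasurable

instance instIsAddLeftInvariantVolumeProd {α β : Type*} [MeasureSpace α] [MeasureSpace β]
    [AddGroup α] [AddGroup β] [MeasurableAdd α] [MeasurableAdd β]
    [SFinite (volume : Measure α)] [SFinite (volume : Measure β)]
    [(volume : Measure α).IsAddLeftInvariant] [(volume : Measure β).IsAddLeftInvariant] :
    (volume : Measure (α × β)).IsAddLeftInvariant := by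
  rw [Measure.volume_eq_prod]; infer_instance

section Convolution

variable {E : Type*} [MeasurableSpace E] [AddGroup E] [MeasurableAdd₂ E] [MeasurableNeg E]
  {μ : Measure E} [SFinite μ]

theorem ae_enorm_sub_le_indicator_mul_eLpNorm_top [μ.IsAddLeftInvariant] {V : Type*}
    [NormedAddCommGroup V] {k : E → V} {S : Set E} (hkS : ∀ w ∉ S, k w = 0) (z : E) :
    ∀ᵐ y ∂μ, ‖k (z - y)‖ₑ ≤ S.indicator 1 (z - y) * eLpNorm k ⊤ μ := by
  have hk : ∀ᵐ w ∂μ, ‖k w‖ₑ ≤ S.indicator 1 w * eLpNorm k ⊤ μ := by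
    filter_upwards [ae_le_eLpNormEssSup (f := k) (μ := μ)] with w hw
    by_cases hwS : w ∈ S
    · simpa [hwS, eLpNorm_exponent_top] using hw
    · simp [hwS, hkS w hwS]
  exact (quasiMeasurePreserving_sub_left μ z).ae hk

theorem enorm_integral_conv_mul_conj_le [μ.IsAddLeftInvariant] {𝕜 : Type*} [RCLike 𝕜]
    (k F G : E → 𝕜) {S : Set E} (hkS : ∀ w ∉ S, k w = 0) :
    ‖∫ z, (∫ y, k (z - y) * F y ∂μ) * starRingEnd 𝕜 (G z) ∂μ‖ₑ ≤
      ∫⁻ z, (∫⁻ y, S.indicator 1 (z - y) * (eLpNorm k ⊤ μ * ‖F y‖ₑ) ∂μ) * ‖G z‖ₑ ∂μ := by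
  calc _ ≤ ∫⁻ z, ‖(∫ y, k (z - y) * F y ∂μ) * starRingEnd 𝕜 (G z)‖ₑ ∂μ :=
        enorm_integral_le_lintegral_enorm _
    _ ≤ ∫⁻ z, (∫⁻ y, ‖k (z - y) * F y‖ₑ ∂μ) * ‖G z‖ₑ ∂μ := by
        refine lintegral_mono fun z => ?_
        rw [enorm_mul, RCLike.enorm_conj]
        gcongr
        exact enorm_integral_le_lintegral_enorm _
    _ ≤ _ := by
        refine lintegral_mono fun z => ?_
        gcongr ?_ * _
        refine lintegral_mono_ae ?_
        filter_upwards [ae_enorm_sub_le_indicator_mul_eLpNorm_top hkS z] with y hy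
        rw [enorm_mul, ← mul_assoc]
        gcongr

theorem lintegral_indicator_sub_mul_le_tsum {ι : Type*} [Countable ι] {S : Set E}
    (hS : MeasurableSet S) {Q Q' : ι → Set E} (hQ : ∀ i, MeasurableSet (Q i))
    (hcover : ⋃ i, Q i = univ) (hQS : ∀ i, ∀ y ∈ Q i, ∀ z, z - y ∈ S → z ∈ Q' i)
    {f g : E → ℝ≥0∞} (hf : AEMeasurable f μ) (hg : AEMeasurable g μ) :
    ∫⁻ z, (∫⁻ y, S.indicator 1 (z - y) * f y ∂μ) * g z ∂μ ≤
      ∑' i, (∫⁻ y in Q i, f y ∂μ) * ∫⁻ z in Q' i, g z ∂μ := by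
  have hχ : Measurable (S.indicator (1 : E → ℝ≥0∞)) := measurable_one.indicator hS
  have hχf : ∀ z, AEMeasurable (fun y => S.indicator 1 (z - y) * f y) μ := fun z =>
    (hχ.comp (measurable_const.sub measurable_id)).aemeasurable.mul hf
  have hχg : ∀ y, AEMeasurable (fun z => S.indicator 1 (z - y) * g z) μ := fun y =>
    (hχ.comp (measurable_id.sub_const y)).aemeasurable.mul hg
  have hlocal : ∀ i, ∀ y ∈ Q i,
      ∫⁻ z, S.indicator 1 (z - y) * g z ∂μ ≤ ∫⁻ z in Q' i, g z ∂μ := by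
    intro i y hy
    rw [← setLIntegral_eq_of_support_subset (s := Q' i)]
    · exact lintegral_mono fun z =>
        mul_le_of_le_one_left' (Set.indicator_le_self' (fun _ _ => zero_le) _)
    · refine Function.support_subset_iff'.2 fun z hz => ?_
      have : z - y ∉ S := fun h => hz (hQS i y hy z h)
      simp [this]
  calc _ = ∫⁻ z, ∫⁻ y, S.indicator 1 (z - y) * f y * g z ∂μ ∂μ :=
        lintegral_congr fun z => (lintegral_mul_const'' _ (hχf z)).symm
    _ = ∫⁻ y, ∫⁻ z, S.indicator 1 (z - y) * f y * g z ∂μ ∂μ :=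
        lintegral_lintegral_swap <|
          ((hχ.comp (measurable_fst.sub measurable_snd)).aemeasurable.mul
            (hf.comp_quasiMeasurePreserving Measure.quasiMeasurePreserving_snd)).mul
            (hg.comp_quasiMeasurePreserving Measure.quasiMeasurePreserving_fst)
    _ = ∫⁻ y, f y * ∫⁻ z, S.indicator 1 (z - y) * g z ∂μ ∂μ := by
        refine lintegral_congr fun y => ?_
        rw [← lintegral_const_mul'' _ (hχg y)]
        exact lintegral_congr fun z => by ring
    _ ≤ ∑' i, ∫⁻ y in Q i, f y * ∫⁻ z, S.indicator 1 (z - y) * g z ∂μ ∂μ := by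
        simpa [hcover] using lintegral_iUnion_le Q _
    _ ≤ ∑' i, ∫⁻ y in Q i, f y * ∫⁻ z in Q' i, g z ∂μ ∂μ :=
        ENNReal.tsum_le_tsum fun i => setLIntegral_mono' (hQ i) fun y hy =>
          mul_le_mul_right (hlocal i y hy) _
    _ = _ := tsum_congr fun i => lintegral_mul_const'' _ hf.restrict

end Convolution

theorem mem_Ico_floor_add_half {r : ℝ} (hr : 0 < r) (x : ℝ) :
    x ∈ Ico (r * ⌊x / r + 1 / 2⌋ - r / 2) (r * ⌊x / r + 1 / 2⌋ + r / 2) := by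
  have h₁ := Int.floor_le (x / r + 1 / 2)
  have h₂ := Int.lt_floor_add_one (x / r + 1 / 2)
  have hx : x = r * (x / r) := by field_simp
  constructor <;> nlinarith

theorem abs_sub_le_two_mul_of_mem_Ico {c r x w : ℝ} (hx : x ∈ Ico (c - r / 2) (c + r / 2))
    (hw : |w - x| ≤ r) : |w - c| ≤ 2 * r := by
  rw [abs_le] at hw ⊢
  obtain ⟨hx₁, hx₂⟩ := hx
  constructor <;> linarith

theorem iUnion_latCube (n j : ℕ) : ⋃ lam, latCube n j lam = univ := by
  have hr : (0 : ℝ) < 2 ^ j := by positivity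
  exact eq_univ_of_forall fun z => mem_iUnion.2
    ⟨(fun i => ⌊z.1 i / 2 ^ j + 1 / 2⌋, ⌊z.2 / 2 ^ j + 1 / 2⌋),
      fun i => mem_Ico_floor_add_half hr _, mem_Ico_floor_add_half hr _⟩

theorem measurableSet_latCube (n j : ℕ) (lam : (Fin n → ℤ) × ℤ) :
    MeasurableSet (latCube n j lam) := by
  unfold latCube
  measurability

theorem mem_latCubeT_of_mem_latCube {n j : ℕ} {lam : (Fin n → ℤ) × ℤ}
    {y z : (Fin n → ℝ) × ℝ} (hy : y ∈ latCube n j lam) (hz : ‖z - y‖ ≤ 2 ^ j) :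
    z ∈ latCubeT n j lam := by
  have hside : (2 : ℝ) ^ (j + 2) / 2 = 2 * 2 ^ j := by ring
  rw [latCubeT, mem_ofPred_eq, hside]
  refine ⟨fun i => abs_sub_le_two_mul_of_mem_Ico (hy.1 i) ?_,
    abs_sub_le_two_mul_of_mem_Ico hy.2 ((norm_snd_le (z - y)).trans hz)⟩
  exact ((norm_le_pi_norm (z - y).1 i).trans (norm_fst_le (z - y))).trans hz

theorem norm_le_sqrt_sum_sq {n : ℕ} (w : (Fin n → ℝ) × ℝ) :
    ‖w‖ ≤ Real.sqrt ((∑ i, (w.1 i) ^ 2) + w.2 ^ 2) := by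
  have hcoord : ∀ i, (w.1 i) ^ 2 ≤ ∑ i, (w.1 i) ^ 2 :=
    fun i => Finset.single_le_sum (fun i _ => sq_nonneg (w.1 i)) (Finset.mem_univ i)
  have hsum : 0 ≤ ∑ i, (w.1 i) ^ 2 := Finset.sum_nonneg fun i _ => sq_nonneg (w.1 i)
  refine max_le ((pi_norm_le_iff_of_nonneg (Real.sqrt_nonneg _)).2 fun i => ?_) ?_
  · exact Real.abs_le_sqrt (by nlinarith [hcoord i, sq_nonneg w.2])
  · exact Real.abs_le_sqrt (by linarith)

theorem statement_15_general (n : ℕ) (j : ℕ)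
    (K : (Fin n → ℝ) × ℝ → ℂ) (ψ : (Fin n → ℝ) × ℝ → ℝ)
    (hψsupp : ∀ z, ψ z ≠ 0 → Real.sqrt ((∑ i, (z.1 i) ^ 2) + z.2 ^ 2) ≤ 2 ^ j)
    (F G : (Fin n → ℝ) × ℝ → ℂ)
    (hF1 : Integrable F) (hG1 : Integrable G) :
    (‖∫ z : (Fin n → ℝ) × ℝ,
        (∫ y : (Fin n → ℝ) × ℝ, (ψ (z - y) : ℂ) * K (z - y) * F y) *
          (starRingEnd ℂ) (G z)‖₊ : ℝ≥0∞) ≤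
      eLpNorm (fun z => (ψ z : ℂ) * K z) ⊤ volume *
        (∑' lam : (Fin n → ℤ) × ℤ,
            (∫⁻ z in latCube n j lam, (‖F z‖₊ : ℝ≥0∞)) ^ (2 : ℝ)) ^ (1 / (2 : ℝ)) *
        (∑' lam : (Fin n → ℤ) × ℤ,
            (∫⁻ z in latCubeT n j lam, (‖G z‖₊ : ℝ≥0∞)) ^ (2 : ℝ)) ^ (1 / (2 : ℝ)) := by
  set M := eLpNorm (fun z => (ψ z : ℂ) * K z) ⊤ volume
  set B := Metric.closedBall (0 : (Fin n → ℝ) × ℝ) (2 ^ j)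
  have hkB : ∀ w ∉ B, (ψ w : ℂ) * K w = 0 := by
    intro w hw
    have : ψ w = 0 := by
      by_contra h
      exact hw (mem_closedBall_zero_iff.2 ((norm_le_sqrt_sum_sq w).trans (hψsupp w h)))
    simp [this]
  have hF := hF1.aestronglyMeasurable.enorm
  simp only [← enorm_eq_nnnorm]
  calc _ ≤ ∫⁻ z, (∫⁻ y, B.indicator 1 (z - y) * (M * ‖F y‖ₑ)) * ‖G z‖ₑ :=
        enorm_integral_conv_mul_conj_le _ F G hkB
    _ ≤ ∑' lam, (∫⁻ y in latCube n j lam, M * ‖F y‖ₑ) * ∫⁻ z in latCubeT n j lam, ‖G z‖ₑ :=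
        lintegral_indicator_sub_mul_le_tsum Metric.isClosed_closedBall.measurableSet
          (measurableSet_latCube n j) (iUnion_latCube n j)
          (fun _ _ hy _ hz => mem_latCubeT_of_mem_latCube hy (mem_closedBall_zero_iff.1 hz))
          (hF.const_mul M) hG1.aestronglyMeasurable.enorm
    _ = M * ∑' lam, (∫⁻ y in latCube n j lam, ‖F y‖ₑ) * ∫⁻ z in latCubeT n j lam, ‖G z‖ₑ := by
        simp_rw [lintegral_const_mul'' M hF.restrict, mul_assoc, ENNReal.tsum_mul_left]
    _ ≤ _ := by
        rw [mul_assoc]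
        gcongr
        exact ENNReal.tsum_mul_le_Lp_mul_Lq _ _ Real.HolderConjugate.two_two

/-- localized bilinear kernel estimate. If `K ∈ L^∞(ℝ^{n+1})`,
`0 ≤ ψ ≤ 1` is supported in the ball `B(0, 2^j)`, and `F, G ∈ L¹ ∩ L²`, then
`|⟨(ψK) ∗ F, G⟩| ≤ ‖ψK‖_∞ (∑_λ ‖Fχ_{Q_λ}‖₁²)^{1/2} (∑_λ ‖Gχ_{Q̃_λ}‖₁²)^{1/2}`. -/
theorem statement_15 (n : ℕ) (j : ℕ)
    (K : (Fin n → ℝ) × ℝ → ℂ) (ψ : (Fin n → ℝ) × ℝ → ℝ)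
    (hK : MemLp K ⊤ volume)
    (hψ0 : ∀ z, 0 ≤ ψ z) (hψ1 : ∀ z, ψ z ≤ 1)
    (hψsupp : ∀ z, ψ z ≠ 0 → Real.sqrt ((∑ i, (z.1 i) ^ 2) + z.2 ^ 2) ≤ 2 ^ j)
    (F G : (Fin n → ℝ) × ℝ → ℂ)
    (hF1 : Integrable F) (hF2 : MemLp F 2) (hG1 : Integrable G) (hG2 : MemLp G 2) :
    (‖∫ z : (Fin n → ℝ) × ℝ,
        (∫ y : (Fin n → ℝ) × ℝ, (ψ (z - y) : ℂ) * K (z - y) * F y) *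
          (starRingEnd ℂ) (G z)‖₊ : ℝ≥0∞) ≤
      eLpNorm (fun z => (ψ z : ℂ) * K z) ⊤ volume *
        (∑' lam : (Fin n → ℤ) × ℤ,
            (∫⁻ z in latCube n j lam, (‖F z‖₊ : ℝ≥0∞)) ^ (2 : ℝ)) ^ (1 / (2 : ℝ)) *
        (∑' lam : (Fin n → ℤ) × ℤ,
            (∫⁻ z in latCubeT n j lam, (‖G z‖₊ : ℝ≥0∞)) ^ (2 : ℝ)) ^ (1 / (2 : ℝ)) :=
  statement_15_general n j K ψ hψsupp F G hF1 hG1
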